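/- There is a constant c > 0 such that for all ρ > 0, all v in the fractional Sobolev space H^{1/2}((0,ρ)), and all real numbers a, b, one has c·ρ²·a² ≤ |a|·∫₀^ρ |v(y) − a·y − b| dy + [v]²_{H^{1/2}((0,ρ))}, where [v]_{H^{1/2}((0,ρ))} denotes the H^{1/2}-seminorm of v. -/

import Mathlib

/-! Let `w` be an extension of `v` with finite Dirichlet energy `E`. Averaging over `x₁ ∈ (-ρ, 0)`
gives a vertical line on which the energy is at most `E / ρ`, so by AM-GM the oscillation of
`g = w (x₁, ·)` on `(0, ρ)` is at most `K = ερ/2 + E/(2ερ)`; integrating `∂ₓw` along horizontal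
segments gives `∫ |v - g| ≤ ερ²/2 + E/(2ε)`. A function of oscillation `K` stays at distance
`≥ (|a|ρ/2 - K)/2` from the line `a y + b` on the first or on the last quarter of `(0, ρ)`, whence
`ρ (|a|ρ - 2K) ≤ 16 (∫ |v - a y - b| + ∫ |v - g|)`, and `ε = |a|/18` closes the estimate. -/

open MeasureTheory

/-- The squared `H^{1/2}`-seminorm of `v` on `(0,ρ)`, defined as the infimum of the
Dirichlet energy over all extensions `w` to the half-strip `(-∞,0) × (0,ρ)` which are
differentiable in the open half-strip and attain the boundary values `v` continuously. -/
noncomputable def H12sq (ρ : ℝ) (v : ℝ → ℝ) : ENNReal :=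
  ⨅ (w : ℝ × ℝ → ℝ) (_ : ContinuousOn w (Set.Iic (0 : ℝ) ×ˢ Set.Ioo 0 ρ))
    (_ : DifferentiableOn ℝ w (Set.Iio (0 : ℝ) ×ˢ Set.Ioo 0 ρ))
    (_ : ∀ y ∈ Set.Ioo (0 : ℝ) ρ, w (0, y) = v y),
    ∫⁻ x in Set.Iio (0 : ℝ) ×ˢ Set.Ioo 0 ρ, ENNReal.ofReal (‖fderiv ℝ w x‖ ^ 2)

open Set

theorem le_half_add_sq_div_two_mul {ε : ℝ} (hε : 0 < ε) (x : ℝ) :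
    x ≤ ε / 2 + x ^ 2 / (2 * ε) := by
  have : 2 * ε * x ≤ ε ^ 2 + x ^ 2 := by nlinarith [sq_nonneg (x - ε)]
  rw [div_add_div _ _ two_ne_zero (by positivity), le_div_iff₀ (by positivity)]
  nlinarith

section Integrals

variable {α : Type*} [MeasurableSpace α] {μ : Measure α} {s : Set α} {f : α → ℝ}

theorem integrableOn_of_integrableOn_sq (hs : μ s ≠ ⊤) (hf : AEStronglyMeasurable f (μ.restrict s))
    (hf2 : IntegrableOn (fun x => f x ^ 2) s μ) : IntegrableOn f s μ :=
  have : IsFiniteMeasure (μ.restrict s) := isFiniteMeasure_restrict.2 hs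
  ((memLp_two_iff_integrable_sq hf).2 hf2).integrable one_le_two

theorem setIntegral_le_half_mul_add_setIntegral_sq_div (hs : μ s ≠ ⊤) (hf : IntegrableOn f s μ)
    (hf2 : IntegrableOn (fun x => f x ^ 2) s μ) {ε : ℝ} (hε : 0 < ε) :
    ∫ x in s, f x ∂μ ≤ ε / 2 * μ.real s + (∫ x in s, f x ^ 2 ∂μ) / (2 * ε) := by
  have hconst : IntegrableOn (fun _ => ε / 2) s μ := integrableOn_const hs
  have hmajorant : IntegrableOn (fun x => ε / 2 + f x ^ 2 / (2 * ε)) s μ :=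
    hconst.add (hf2.div_const _)
  calc ∫ x in s, f x ∂μ ≤ ∫ x in s, (ε / 2 + f x ^ 2 / (2 * ε)) ∂μ :=
        integral_mono hf hmajorant
          fun x => le_half_add_sq_div_two_mul hε (f x)
    _ = ε / 2 * μ.real s + (∫ x in s, f x ^ 2 ∂μ) / (2 * ε) := by
        rw [integral_add hconst (hf2.div_const _), setIntegral_const, integral_div, smul_eq_mul,
          mul_comm]

theorem integrableOn_of_abs_sub_le (hsm : MeasurableSet s) (hs : μ s ≠ ⊤)
    (hf : AEStronglyMeasurable f (μ.restrict s)) {x₀ : α} {K : ℝ}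
    (hosc : ∀ x ∈ s, |f x - f x₀| ≤ K) : IntegrableOn f s μ :=
  ⟨hf, .restrict_of_bounded (C := |f x₀| + K) hs.lt_top <| ae_restrict_of_forall_mem hsm fun x hx =>
    by linarith [abs_sub_abs_le_abs_sub (f x) (f x₀), hosc x hx, Real.norm_eq_abs (f x)]⟩

end Integrals

theorem abs_sub_le_setIntegral_norm_fderiv {E : Type*} [NormedAddCommGroup E] [NormedSpace ℝ E]
    {w : E → ℝ} {γ : ℝ → E} {u : E} {a b : ℝ} (hu : ‖u‖ ≤ 1) (hγ : ∀ t, HasDerivAt γ u t)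
    (hab : a ≤ b) (hcont : ContinuousOn (fun t => w (γ t)) (Icc a b))
    (hdiff : ∀ t ∈ Ioo a b, DifferentiableAt ℝ w (γ t))
    (hint : IntegrableOn (fun t => ‖fderiv ℝ w (γ t)‖) (Ioo a b)) :
    |w (γ b) - w (γ a)| ≤ ∫ t in Ioo a b, ‖fderiv ℝ w (γ t)‖ := by
  have hderiv : ∀ t ∈ Ioo a b, HasDerivAt (fun t => w (γ t)) (fderiv ℝ w (γ t) u) t :=
    fun t ht => (hdiff t ht).hasFDerivAt.comp_hasDerivAt t (hγ t)
  have hbound : ∀ t, |fderiv ℝ w (γ t) u| ≤ ‖fderiv ℝ w (γ t)‖ := fun t =>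
    ((fderiv ℝ w (γ t)).le_opNorm u).trans (mul_le_of_le_one_right (norm_nonneg _) hu)
  rw [← integrableOn_Icc_iff_integrableOn_Ioo] at hint
  rw [← integral_Ioc_eq_integral_Ioo, ← intervalIntegral.integral_of_le hab, abs_sub_le_iff]
  constructor
  · exact intervalIntegral.sub_le_integral_of_hasDeriv_right_of_le hab hcont
      (fun t ht => (hderiv t ht).hasDerivWithinAt) hint fun t _ => (le_abs_self _).trans (hbound t)
  · have := intervalIntegral.sub_le_integral_of_hasDeriv_right_of_le hab hcont.neg
      (fun t ht => (hderiv t ht).neg.hasDerivWithinAt) hint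
      fun t _ => (neg_le_abs _).trans (hbound t)
    simp only [Pi.neg_apply] at this
    linarith

theorem exists_mem_Ioo_mul_setIntegral_slice_le {f : ℝ × ℝ → ℝ} (hf : Measurable f)
    (hf0 : ∀ p, 0 ≤ f p) {a b c d : ℝ} (hab : a < b)
    (hint : IntegrableOn f (Ioo a b ×ˢ Ioo c d)) :
    ∃ t ∈ Ioo a b, IntegrableOn (fun y => f (t, y)) (Ioo c d) ∧
      (b - a) * ∫ y in Ioo c d, f (t, y) ≤ ∫ p in Ioo a b ×ˢ Ioo c d, f p := by
  have hslices : Measurable fun t => ∫⁻ y in Ioo c d, ENNReal.ofReal (f (t, y)) :=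
    hf.ennreal_ofReal.lintegral_prod_right'
  obtain ⟨t, ht, hle⟩ := exists_le_setLAverage (μ := volume) (s := Ioo a b)
    (by simp [hab]) (by simp) hslices.aemeasurable
  have htotal : ∫⁻ t in Ioo a b, ∫⁻ y in Ioo c d, ENNReal.ofReal (f (t, y)) =
      ENNReal.ofReal (∫ p in Ioo a b ×ˢ Ioo c d, f p) := by
    rw [ofReal_integral_eq_lintegral_ofReal hint (ae_of_all _ hf0), Measure.volume_eq_prod,
      ← Measure.prod_restrict, lintegral_prod _ hf.ennreal_ofReal.aemeasurable]
  rw [setLAverage_eq, htotal, Real.volume_Ioo, ← ENNReal.ofReal_div_of_pos (sub_pos.2 hab)] at hle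
  have hslice : IntegrableOn (fun y => f (t, y)) (Ioo c d) :=
    (lintegral_ofReal_ne_top_iff_integrable (hf.comp measurable_prodMk_left).aestronglyMeasurable
      (ae_of_all _ fun y => hf0 _)).1 (ne_top_of_le_ne_top ENNReal.ofReal_ne_top hle)
  refine ⟨t, ht, hslice, ?_⟩
  rwa [← ofReal_integral_eq_lintegral_ofReal hslice (ae_of_all _ fun y => hf0 _),
    ENNReal.ofReal_le_ofReal_iff (div_nonneg (integral_nonneg hf0) (sub_pos.2 hab).le),
    le_div_iff₀' (sub_pos.2 hab)] at hle

theorem mul_sub_le_setIntegral_abs_sub_linear {g : ℝ → ℝ} {ρ K : ℝ} (hρ : 0 < ρ)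
    (hg : IntegrableOn g (Ioo 0 ρ)) (hosc : ∀ y₁ ∈ Ioo 0 ρ, ∀ y₂ ∈ Ioo 0 ρ, |g y₂ - g y₁| ≤ K)
    (a b : ℝ) : ρ * (|a| * ρ - 2 * K) ≤ 16 * ∫ y in Ioo 0 ρ, |g y - (a * y + b)| := by
  set G : ℝ → ℝ := fun y => |g y - (a * y + b)|
  have hG : IntegrableOn G (Ioo 0 ρ) :=
    (hg.sub ((by fun_prop : Continuous fun y : ℝ => a * y + b).integrableOn_Icc.mono_set
      Ioo_subset_Icc_self)).abs
  have hpair : ∀ y₁ ∈ Ioo 0 (ρ / 4), ∀ y₂ ∈ Ioo (3 * ρ / 4) ρ,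
      |a| * ρ / 2 - K ≤ G y₁ + G y₂ := by
    intro y₁ hy₁ y₂ hy₂
    have hosc₁₂ := hosc y₁ ⟨hy₁.1, by linarith [hy₁.2]⟩ y₂ ⟨by linarith [hy₂.1], hy₂.2⟩
    have hgap : |a| * (ρ / 2) ≤ |a * (y₂ - y₁)| := by
      rw [abs_mul, abs_of_pos (show 0 < y₂ - y₁ by linarith [hy₁.2, hy₂.1])]
      gcongr
      linarith [hy₁.2, hy₂.1]
    have hsplit : a * (y₂ - y₁) =
        (g y₂ - g y₁) + (g y₁ - (a * y₁ + b)) - (g y₂ - (a * y₂ + b)) := by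
      ring
    have h₁ := abs_sub ((g y₂ - g y₁) + (g y₁ - (a * y₁ + b))) (g y₂ - (a * y₂ + b))
    have h₂ := abs_add_le (g y₂ - g y₁) (g y₁ - (a * y₁ + b))
    rw [← hsplit] at h₁
    linarith
  have hquarter : ∀ c, Ioo c (c + ρ / 4) ⊆ Ioo 0 ρ →
      (∀ y ∈ Ioo c (c + ρ / 4), (|a| * ρ / 2 - K) / 2 ≤ G y) →
      ρ * (|a| * ρ - 2 * K) ≤ 16 * ∫ y in Ioo 0 ρ, G y := by
    intro c hsub hm
    have hlow := setIntegral_ge_of_const_le_real measurableSet_Ioo measure_Ioo_lt_top.ne hm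
      (hG.mono_set hsub)
    have hmono : ∫ y in Ioo c (c + ρ / 4), G y ≤ ∫ y in Ioo 0 ρ, G y :=
      setIntegral_mono_set hG (ae_of_all _ fun y => abs_nonneg _) hsub.eventuallyLE
    rw [Real.volume_real_Ioo_of_le (by linarith)] at hlow
    linarith
  by_cases hfirst : ∀ y ∈ Ioo 0 (ρ / 4), (|a| * ρ / 2 - K) / 2 ≤ G y
  · exact hquarter 0 (fun y hy => ⟨hy.1, by linarith [hy.2]⟩) (by simpa using hfirst)
  · push Not at hfirst
    obtain ⟨y₁, hy₁, hlt⟩ := hfirst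
    refine hquarter (3 * ρ / 4) (fun y hy => ⟨by linarith [hy.1], by linarith [hy.2]⟩) ?_
    intro y₂ hy₂
    linarith [hpair y₁ hy₁ y₂ ⟨hy₂.1, by linarith [hy₂.2]⟩]

theorem mul_sub_le_setIntegral_abs_sub_linear_add {v g : ℝ → ℝ} {ρ K : ℝ} (hρ : 0 < ρ)
    (hg : AEStronglyMeasurable g (volume.restrict (Ioo 0 ρ)))
    (hosc : ∀ y₁ ∈ Ioo 0 ρ, ∀ y₂ ∈ Ioo 0 ρ, |g y₂ - g y₁| ≤ K)
    (hvg : IntegrableOn (fun y => v y - g y) (Ioo 0 ρ)) (a b : ℝ) :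
    ρ * (|a| * ρ - 2 * K) ≤
      16 * ((∫ y in Ioo 0 ρ, |v y - a * y - b|) + ∫ y in Ioo 0 ρ, |v y - g y|) := by
  have hgint : IntegrableOn g (Ioo 0 ρ) := integrableOn_of_abs_sub_le measurableSet_Ioo
    measure_Ioo_lt_top.ne hg fun y hy => hosc (ρ / 2) ⟨by linarith, by linarith⟩ y hy
  have hgℓ : IntegrableOn (fun y => g y - (a * y + b)) (Ioo 0 ρ) :=
    hgint.sub ((by fun_prop : Continuous fun y : ℝ => a * y + b).integrableOn_Icc.mono_set
      Ioo_subset_Icc_self)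
  have hvℓ : IntegrableOn (fun y => v y - a * y - b) (Ioo 0 ρ) :=
    (hvg.add hgℓ).congr_fun (fun y _ => by simp only [Pi.add_apply]; ring) measurableSet_Ioo
  have htri : ∫ y in Ioo 0 ρ, |g y - (a * y + b)| ≤
      (∫ y in Ioo 0 ρ, |v y - a * y - b|) + ∫ y in Ioo 0 ρ, |v y - g y| := by
    rw [← integral_add hvℓ.abs hvg.abs]
    refine integral_mono hgℓ.abs (hvℓ.abs.add hvg.abs) fun y => ?_
    calc |g y - (a * y + b)| = |(v y - a * y - b) - (v y - g y)| := by ring_nf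
      _ ≤ |v y - a * y - b| + |v y - g y| := abs_sub _ _
  linarith [mul_sub_le_setIntegral_abs_sub_linear hρ hgint hosc a b]

section Strip

variable {w : ℝ × ℝ → ℝ} {ρ x₁ : ℝ}

theorem abs_sub_le_setIntegral_norm_fderiv_slice
    (hdiff : ∀ y ∈ Ioo 0 ρ, DifferentiableAt ℝ w (x₁, y))
    (hint : IntegrableOn (fun y => ‖fderiv ℝ w (x₁, y)‖) (Ioo 0 ρ)) {y₁ y₂ : ℝ}
    (hy₁ : y₁ ∈ Ioo 0 ρ) (hy₂ : y₂ ∈ Ioo 0 ρ) :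
    |w (x₁, y₂) - w (x₁, y₁)| ≤ ∫ y in Ioo 0 ρ, ‖fderiv ℝ w (x₁, y)‖ := by
  wlog hle : y₁ ≤ y₂ generalizing y₁ y₂
  · rw [abs_sub_comm]
    exact this hy₂ hy₁ (le_of_not_ge hle)
  have hsub : Icc y₁ y₂ ⊆ Ioo 0 ρ := Icc_subset_Ioo hy₁.1 hy₂.2
  have hline : ∀ t, HasDerivAt (fun t : ℝ => (x₁, t)) ((0 : ℝ), (1 : ℝ)) t :=
    fun t => (hasDerivAt_const t x₁).prodMk (hasDerivAt_id t)
  calc |w (x₁, y₂) - w (x₁, y₁)| ≤ ∫ y in Ioo y₁ y₂, ‖fderiv ℝ w (x₁, y)‖ :=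
        abs_sub_le_setIntegral_norm_fderiv (by simp) hline hle
          (fun t ht => ((hdiff t (hsub ht)).continuousAt.comp
            (hline t).continuousAt).continuousWithinAt)
          (fun t ht => hdiff t (hsub (Ioo_subset_Icc_self ht)))
          (hint.mono_set (Ioo_subset_Icc_self.trans hsub))
    _ ≤ ∫ y in Ioo 0 ρ, ‖fderiv ℝ w (x₁, y)‖ :=
        setIntegral_mono_set hint (ae_of_all _ fun _ => norm_nonneg _)
          (Ioo_subset_Icc_self.trans hsub).eventuallyLE

theorem setIntegral_abs_sub_slice_le (hcont : ContinuousOn w (Iic 0 ×ˢ Ioo 0 ρ))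
    (hdiff : DifferentiableOn ℝ w (Iio 0 ×ˢ Ioo 0 ρ)) (hx₁ : x₁ < 0)
    (hint : IntegrableOn (fun p => ‖fderiv ℝ w p‖) (Ioo x₁ 0 ×ˢ Ioo 0 ρ)) :
    IntegrableOn (fun y => w (0, y) - w (x₁, y)) (Ioo 0 ρ) ∧
      ∫ y in Ioo 0 ρ, |w (0, y) - w (x₁, y)| ≤ ∫ p in Ioo x₁ 0 ×ˢ Ioo 0 ρ, ‖fderiv ℝ w p‖ := by
  rw [IntegrableOn, Measure.volume_eq_prod, ← Measure.prod_restrict] at hint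
  have hline : ∀ y t, HasDerivAt (fun t : ℝ => (t, y)) ((1 : ℝ), (0 : ℝ)) t :=
    fun y t => (hasDerivAt_id t).prodMk (hasDerivAt_const t y)
  have hbound : ∀ᵐ y ∂volume.restrict (Ioo 0 ρ),
      |w (0, y) - w (x₁, y)| ≤ ∫ t in Ioo x₁ 0, ‖fderiv ℝ w (t, y)‖ := by
    filter_upwards [hint.prod_left_ae, ae_restrict_mem measurableSet_Ioo] with y hslice hy
    refine abs_sub_le_setIntegral_norm_fderiv (by simp) (hline y) hx₁.le ?_ ?_ hslice
    · exact hcont.comp (by fun_prop) fun t ht => ⟨ht.2, hy⟩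
    · exact fun t ht => hdiff.differentiableAt
        ((isOpen_Iio.prod isOpen_Ioo).mem_nhds ⟨ht.2, hy⟩)
  have hmeas :
      AEStronglyMeasurable (fun y => w (0, y) - w (x₁, y)) (volume.restrict (Ioo 0 ρ)) := by
    refine ContinuousOn.aestronglyMeasurable (ContinuousOn.sub ?_ ?_) measurableSet_Ioo
    · exact hcont.comp (by fun_prop) fun y hy => ⟨le_refl (0 : ℝ), hy⟩
    · exact hcont.comp (by fun_prop) fun y hy => ⟨hx₁.le, hy⟩
  refine ⟨hint.integral_prod_right.mono' hmeas hbound, ?_⟩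
  rw [Measure.volume_eq_prod, ← Measure.prod_restrict, integral_prod_symm _ hint]
  exact integral_mono_ae (hint.integral_prod_right.mono' hmeas hbound).abs hint.integral_prod_right
    hbound

theorem exists_slice_osc_le_and_setIntegral_abs_sub_le (hρ : 0 < ρ)
    (hcont : ContinuousOn w (Iic 0 ×ˢ Ioo 0 ρ)) (hdiff : DifferentiableOn ℝ w (Iio 0 ×ˢ Ioo 0 ρ))
    (hE : IntegrableOn (fun p => ‖fderiv ℝ w p‖ ^ 2) (Iio 0 ×ˢ Ioo 0 ρ)) {ε : ℝ} (hε : 0 < ε) :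
    ∃ x₁ < 0,
      (∀ y₁ ∈ Ioo 0 ρ, ∀ y₂ ∈ Ioo 0 ρ, |w (x₁, y₂) - w (x₁, y₁)| ≤
        ε / 2 * ρ + (∫ p in Iio 0 ×ˢ Ioo 0 ρ, ‖fderiv ℝ w p‖ ^ 2) / (2 * ε * ρ)) ∧
      IntegrableOn (fun y => w (0, y) - w (x₁, y)) (Ioo 0 ρ) ∧
      ∫ y in Ioo 0 ρ, |w (0, y) - w (x₁, y)| ≤
        ε / 2 * ρ ^ 2 + (∫ p in Iio 0 ×ˢ Ioo 0 ρ, ‖fderiv ℝ w p‖ ^ 2) / (2 * ε) := by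
  set E := ∫ p in Iio 0 ×ˢ Ioo 0 ρ, ‖fderiv ℝ w p‖ ^ 2
  have hm : Measurable fun p => ‖fderiv ℝ w p‖ := (measurable_fderiv ℝ w).norm
  have hsq_le : ∀ s ⊆ Iio 0 ×ˢ Ioo 0 ρ, ∫ p in s, ‖fderiv ℝ w p‖ ^ 2 ≤ E := fun s hs =>
    setIntegral_mono_set hE (ae_of_all _ fun _ => sq_nonneg _) hs.eventuallyLE
  have hsquare : Ioo (-ρ) 0 ×ˢ Ioo 0 ρ ⊆ Iio 0 ×ˢ Ioo 0 ρ :=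
    prod_mono Ioo_subset_Iio_self subset_rfl
  obtain ⟨x₁, hx₁, hslice2, hslice_le⟩ := exists_mem_Ioo_mul_setIntegral_slice_le (hm.pow_const 2)
    (fun _ => sq_nonneg _) (neg_lt_zero.2 hρ) (hE.mono_set hsquare)
  have hslice2_le : ρ * ∫ y in Ioo 0 ρ, ‖fderiv ℝ w (x₁, y)‖ ^ 2 ≤ E := by
    rw [zero_sub, neg_neg] at hslice_le
    exact hslice_le.trans (hsq_le _ hsquare)
  have hslice : IntegrableOn (fun y => ‖fderiv ℝ w (x₁, y)‖) (Ioo 0 ρ) :=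
    integrableOn_of_integrableOn_sq measure_Ioo_lt_top.ne
      (hm.comp measurable_prodMk_left).aestronglyMeasurable hslice2
  have hRS : Ioo x₁ 0 ×ˢ Ioo 0 ρ ⊆ Iio 0 ×ˢ Ioo 0 ρ := prod_mono Ioo_subset_Iio_self subset_rfl
  have hRfin : volume (Ioo x₁ 0 ×ˢ Ioo 0 ρ) ≠ ⊤ := by
    rw [Measure.volume_eq_prod, Measure.prod_prod, Real.volume_Ioo, Real.volume_Ioo]
    finiteness
  have hR2 := hE.mono_set hRS
  have hR := integrableOn_of_integrableOn_sq hRfin hm.aestronglyMeasurable.restrict hR2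
  obtain ⟨htrace, htrace_le⟩ := setIntegral_abs_sub_slice_le hcont hdiff hx₁.2 hR
  refine ⟨x₁, hx₁.2, fun y₁ hy₁ y₂ hy₂ => ?_, htrace, htrace_le.trans ?_⟩
  · refine (abs_sub_le_setIntegral_norm_fderiv_slice (fun y hy => hdiff.differentiableAt
      ((isOpen_Iio.prod isOpen_Ioo).mem_nhds ⟨hx₁.2, hy⟩)) hslice hy₁ hy₂).trans ?_
    refine (setIntegral_le_half_mul_add_setIntegral_sq_div measure_Ioo_lt_top.ne hslice hslice2
      hε).trans ?_
    have hslice2_le' : ∫ y in Ioo 0 ρ, ‖fderiv ℝ w (x₁, y)‖ ^ 2 ≤ E / ρ := by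
      rwa [le_div_iff₀ hρ, mul_comm]
    rw [Real.volume_real_Ioo_of_le hρ.le, sub_zero, show E / (2 * ε * ρ) = E / ρ / (2 * ε) by ring]
    gcongr
  · refine (setIntegral_le_half_mul_add_setIntegral_sq_div hRfin hR hR2 hε).trans ?_
    have hvol : volume.real (Ioo x₁ 0 ×ˢ Ioo 0 ρ) ≤ ρ ^ 2 := by
      rw [Measure.volume_eq_prod, measureReal_prod_prod, Real.volume_real_Ioo_of_le hx₁.2.le,
        Real.volume_real_Ioo_of_le hρ.le]
      nlinarith [hx₁.1]
    gcongr
    exact hsq_le _ hRS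

end Strip

theorem sq_mul_sq_div_le_abs_mul_add_setIntegral_norm_fderiv_sq {w : ℝ × ℝ → ℝ} {ρ : ℝ}
    {v : ℝ → ℝ} (hρ : 0 < ρ)
    (hcont : ContinuousOn w (Iic 0 ×ˢ Ioo 0 ρ)) (hdiff : DifferentiableOn ℝ w (Iio 0 ×ˢ Ioo 0 ρ))
    (hbv : ∀ y ∈ Ioo 0 ρ, w (0, y) = v y)
    (hE : IntegrableOn (fun p => ‖fderiv ℝ w p‖ ^ 2) (Iio 0 ×ˢ Ioo 0 ρ)) (a b : ℝ) :
    ρ ^ 2 * a ^ 2 / 324 ≤ |a| * (∫ y in Ioo 0 ρ, |v y - a * y - b|) +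
      ∫ p in Iio 0 ×ˢ Ioo 0 ρ, ‖fderiv ℝ w p‖ ^ 2 := by
  have hE0 : 0 ≤ ∫ p in Iio 0 ×ˢ Ioo 0 ρ, ‖fderiv ℝ w p‖ ^ 2 := integral_nonneg fun _ => sq_nonneg _
  rcases eq_or_ne a 0 with rfl | ha
  · simp [hE0]
  obtain ⟨x₁, hx₁, hosc, htrace, htrace_le⟩ :=
    exists_slice_osc_le_and_setIntegral_abs_sub_le hρ hcont hdiff hE (ε := |a| / 18) (by positivity)
  have htrace_eq : EqOn (fun y => w (0, y) - w (x₁, y)) (fun y => v y - w (x₁, y)) (Ioo 0 ρ) :=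
    fun y hy => by simp only [hbv y hy]
  rw [setIntegral_congr_fun measurableSet_Ioo (g := fun y => |v y - w (x₁, y)|)
    fun y hy => by simp only [hbv y hy]] at htrace_le
  have hslice_cont : ContinuousOn (fun y => w (x₁, y)) (Ioo 0 ρ) :=
    hcont.comp (by fun_prop) fun y hy => ⟨hx₁.le, hy⟩
  have h1D := mul_sub_le_setIntegral_abs_sub_linear_add hρ
    (hslice_cont.aestronglyMeasurable measurableSet_Ioo) hosc
    (htrace.congr_fun htrace_eq measurableSet_Ioo) a b
  set E := ∫ p in Iio 0 ×ˢ Ioo 0 ρ, ‖fderiv ℝ w p‖ ^ 2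
  set F := ∫ y in Ioo 0 ρ, |v y - a * y - b|
  set A := |a|
  have hA : 0 < A := abs_pos.2 ha
  -- with `ε = |a| / 18` the two error terms in `ε` absorb half of `|a| ρ²`
  have hhalf : A * ρ ^ 2 / 2 ≤ 16 * F + 162 * E / A := by
    have hlhs : ρ * (A * ρ - 2 * (A / 18 / 2 * ρ + E / (2 * (A / 18) * ρ))) =
        A * ρ ^ 2 - A / 18 * ρ ^ 2 - 18 * E / A := by
      field_simp; ring
    have hrhs : 16 * (A / 18 / 2 * ρ ^ 2 + E / (2 * (A / 18))) =
        4 / 9 * A * ρ ^ 2 + 144 * E / A := by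
      field_simp; ring
    have h16 := mul_le_mul_of_nonneg_left htrace_le (by norm_num : (0 : ℝ) ≤ 16)
    rw [hrhs] at h16
    rw [hlhs] at h1D
    have hcollect : 18 * E / A + 144 * E / A = 162 * E / A := by ring
    linarith
  have hmul := mul_le_mul_of_nonneg_left hhalf hA.le
  rw [mul_add, mul_div_cancel₀ _ hA.ne'] at hmul
  have ha2 : a ^ 2 = A ^ 2 := (sq_abs a).symm
  have hF0 : 0 ≤ F := integral_nonneg fun _ => abs_nonneg _
  nlinarith

theorem ofReal_sub_le_lintegral_norm_fderiv_sq {w : ℝ × ℝ → ℝ} {ρ : ℝ} {v : ℝ → ℝ} (hρ : 0 < ρ)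
    (hcont : ContinuousOn w (Iic 0 ×ˢ Ioo 0 ρ)) (hdiff : DifferentiableOn ℝ w (Iio 0 ×ˢ Ioo 0 ρ))
    (hbv : ∀ y ∈ Ioo 0 ρ, w (0, y) = v y) (a b : ℝ) :
    ENNReal.ofReal (ρ ^ 2 * a ^ 2 / 324 - |a| * ∫ y in Ioo 0 ρ, |v y - a * y - b|) ≤
      ∫⁻ p in Iio 0 ×ˢ Ioo 0 ρ, ENNReal.ofReal (‖fderiv ℝ w p‖ ^ 2) := by
  by_cases hfin : ∫⁻ p in Iio 0 ×ˢ Ioo 0 ρ, ENNReal.ofReal (‖fderiv ℝ w p‖ ^ 2) = ⊤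
  · exact hfin ▸ le_top
  have hsq_nonneg : ∀ p, 0 ≤ ‖fderiv ℝ w p‖ ^ 2 := fun _ => sq_nonneg _
  have hE : IntegrableOn (fun p => ‖fderiv ℝ w p‖ ^ 2) (Iio 0 ×ˢ Ioo 0 ρ) :=
    (lintegral_ofReal_ne_top_iff_integrable
      ((measurable_fderiv ℝ w).norm.pow_const 2).aestronglyMeasurable
      (ae_of_all _ hsq_nonneg)).1 hfin
  rw [← ofReal_integral_eq_lintegral_ofReal hE (ae_of_all _ hsq_nonneg)]
  exact ENNReal.ofReal_le_ofReal <| sub_le_iff_le_add'.2 <|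
    sq_mul_sq_div_le_abs_mul_add_setIntegral_norm_fderiv_sq hρ hcont hdiff hbv hE a b

/-- Lemma 2.3 of the paper (a variant of Lemma 2 in [Conti '06]): there is `c > 0` such
that for all `ρ > 0`, all `v ∈ H^{1/2}((0,ρ))`, and all `a b : ℝ`,
`c ρ² a² ≤ |a| ∫₀^ρ |v(y) - a y - b| dy + [v]²_{H^{1/2}((0,ρ))}`. -/
theorem h_half_seminorm_lower_bound :
    ∃ c : ℝ, 0 < c ∧ ∀ ρ : ℝ, 0 < ρ → ∀ v : ℝ → ℝ, H12sq ρ v ≠ ⊤ →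
      ∀ a b : ℝ,
        c * ρ ^ 2 * a ^ 2 ≤
          |a| * (∫ y in Set.Ioo (0 : ℝ) ρ, |v y - a * y - b|) + (H12sq ρ v).toReal := by
  refine ⟨1 / 324, by norm_num, fun ρ hρ v hfin a b => ?_⟩
  have hlow : ENNReal.ofReal (ρ ^ 2 * a ^ 2 / 324 - |a| * ∫ y in Ioo 0 ρ, |v y - a * y - b|) ≤
      H12sq ρ v :=
    le_iInf fun w => le_iInf fun hcont => le_iInf fun hdiff => le_iInf fun hbv =>
      ofReal_sub_le_lintegral_norm_fderiv_sq hρ hcont hdiff hbv a b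
  have := (ENNReal.ofReal_le_iff_le_toReal hfin).1 hlow
  linarith
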